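/- Let U = (0,∞) × (0,∞) ⊆ ℝ². The set of triples (a,b,c) of smooth real-valued functions on U satisfying the system ∂_y a = 0; (y²+x)·∂_x a + (y²+x)·∂_y b + 2a + 2y·b = 0; (y²+x)·∂_x b + (y²+x)·∂_y c + b + 4y·c = 0; ∂_x c = 0 is a real vector space of dimension exactly 3. -/

import Mathlib

noncomputable section

/-- The partial derivative of `f : ℝ² → ℝ` in the `i`-th coordinate direction
(`0 ↦ x`, `1 ↦ y`). -/
def pd (i : Fin 2) (f : ℝ × ℝ → ℝ) (p : ℝ × ℝ) : ℝ :=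
  fderiv ℝ f p (if i = 0 then ((1 : ℝ), (0 : ℝ)) else ((0 : ℝ), (1 : ℝ)))

/-- `(a,b,c)` is a smooth solution on `U = (0,∞)×(0,∞)` of the system of PDEs expressing
that `F = a p₁² + b p₁p₂ + c p₂²` is an integral of the geodesic flow of
`ds² = 2(y²+x)dxdy` (the case `Y(y) = y²`, case 3d). -/
def Sol3d (a b c : ℝ × ℝ → ℝ) : Prop :=
  ContDiffOn ℝ (⊤ : ℕ∞) a (Set.Ioi 0 ×ˢ Set.Ioi 0) ∧
  ContDiffOn ℝ (⊤ : ℕ∞) b (Set.Ioi 0 ×ˢ Set.Ioi 0) ∧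
  ContDiffOn ℝ (⊤ : ℕ∞) c (Set.Ioi 0 ×ˢ Set.Ioi 0) ∧
  ∀ p ∈ (Set.Ioi 0 ×ˢ Set.Ioi 0 : Set (ℝ × ℝ)),
    pd 1 a p = 0 ∧
    (p.2 ^ 2 + p.1) * pd 0 a p + (p.2 ^ 2 + p.1) * pd 1 b p
      + 2 * a p + 2 * p.2 * b p = 0 ∧
    (p.2 ^ 2 + p.1) * pd 0 b p + (p.2 ^ 2 + p.1) * pd 1 c p
      + b p + 4 * p.2 * c p = 0 ∧
    pd 0 c p = 0

/-!
Since `∂_y a = 0` and `∂_x c = 0`, we have `a = A(x)` and `c = C(y)`. The second equation says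
that `(y²+x) b + A'(x) (y³/3 + xy) + 2 A(x) y` does not depend on `y`; call it `f(x)`.
Differentiating in `x` and using the third equation gives the separated identity
`f'(x) - A''(x) (y³/3 + xy) - 3 A'(x) y + (y²+x) C'(y) + 4y C(y) = 0`.
Comparing two values of `x` shows that `C'` is a cubic polynomial, hence `C` a quartic, and the
identity becomes a polynomial identity in `y` whose coefficients force `C` to be constant,
`A' = 4C/3` and `f' = 0`. So every solution is `a = α + βx`, `c = 3β/4`,
`(y²+x) b = γ - 2αy - β(y³/3 + 3xy)`: a three-parameter family.
-/

open Set

theorem IsOpen.eq_of_hasDerivAt_zero {𝕜 G : Type*} [RCLike 𝕜] [NormedAddCommGroup G]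
    [NormedSpace 𝕜 G] {s : Set 𝕜} (hs : IsOpen s) (hs' : IsPreconnected s) {f : 𝕜 → G}
    (hf : ∀ x ∈ s, HasDerivAt f 0 x) {x y : 𝕜} (hx : x ∈ s) (hy : y ∈ s) : f x = f y :=
  hs.is_const_of_deriv_eq_zero hs'
    (fun z hz => (hf z hz).differentiableAt.differentiableWithinAt)
    (fun z hz => (hf z hz).deriv) hx hy

theorem IsOpen.sub_eq_sub_of_hasDerivAt {𝕜 G : Type*} [RCLike 𝕜] [NormedAddCommGroup G]
    [NormedSpace 𝕜 G] {s : Set 𝕜} (hs : IsOpen s) (hs' : IsPreconnected s) {f g f' : 𝕜 → G}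
    (hf : ∀ x ∈ s, HasDerivAt f (f' x) x) (hg : ∀ x ∈ s, HasDerivAt g (f' x) x) {x y : 𝕜}
    (hx : x ∈ s) (hy : y ∈ s) : f x - g x = f y - g y :=
  hs.eq_of_hasDerivAt_zero hs' (f := f - g)
    (fun z hz => by simpa using (hf z hz).sub (hg z hz)) hx hy

theorem ContDiffOn.hasDerivAt_deriv {𝕜 F : Type*} [NontriviallyNormedField 𝕜]
    [NormedAddCommGroup F] [NormedSpace 𝕜 F] {s : Set 𝕜} (hs : IsOpen s) {f : 𝕜 → F}
    (hf : ContDiffOn 𝕜 2 f s) {x : 𝕜} (hx : x ∈ s) :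
    HasDerivAt (deriv f) (deriv (deriv f) x) x :=
  (((hf.deriv_of_isOpen hs (m := 1) le_rfl).differentiableOn one_ne_zero).differentiableAt
    (hs.mem_nhds hx)).hasDerivAt

theorem eq_zero_of_quintic_eq_zero_Ioi {c₀ c₁ c₂ c₃ c₄ c₅ : ℝ}
    (h : ∀ y > 0, c₀ + c₁ * y + c₂ * y ^ 2 + c₃ * y ^ 3 + c₄ * y ^ 4 + c₅ * y ^ 5 = 0) :
    c₀ = 0 ∧ c₁ = 0 ∧ c₂ = 0 ∧ c₃ = 0 ∧ c₄ = 0 ∧ c₅ = 0 := by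
  have h₁ := h 1 (by norm_num); have h₂ := h 2 (by norm_num); have h₃ := h 3 (by norm_num)
  have h₄ := h 4 (by norm_num); have h₅ := h 5 (by norm_num); have h₆ := h 6 (by norm_num)
  norm_num at h₁ h₂ h₃ h₄ h₅ h₆
  refine ⟨?_, ?_, ?_, ?_, ?_, ?_⟩ <;> linarith

theorem eq_const_of_separated_identity {F P Q C C' : ℝ → ℝ}
    (hQ : ∀ x > 0, HasDerivAt Q (P x) x) (hC : ∀ y > 0, HasDerivAt C (C' y) y)
    (h : ∀ x > 0, ∀ y > 0,
      F x - P x * (y ^ 3 / 3 + x * y) - 3 * Q x * y + (y ^ 2 + x) * C' y + 4 * y * C y = 0) :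
    (∀ x > 0, F x = 0 ∧ Q x = 4 / 3 * C 1) ∧ ∀ y > 0, C y = C 1 := by
  set k₀ := F 1 - F 2
  set k₁ := 2 * P 2 - P 1 + 3 * Q 2 - 3 * Q 1
  set k₃ := (P 2 - P 1) / 3
  set c₀ := C 1 - k₀ - k₁ / 2 - k₃ / 4
  have hC' : ∀ y > 0, C' y = k₀ + k₁ * y + k₃ * y ^ 3 := fun y hy => by
    linear_combination h 2 (by norm_num) y hy - h 1 (by norm_num) y hy
  have hCpoly : ∀ y > 0, C y = c₀ + k₀ * y + k₁ / 2 * y ^ 2 + k₃ / 4 * y ^ 4 := by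
    intro y hy
    have hpoly : ∀ z ∈ Ioi (0 : ℝ),
        HasDerivAt (fun z => k₀ * z + k₁ / 2 * z ^ 2 + k₃ / 4 * z ^ 4) (C' z) z := by
      intro z hz
      rw [hC' z hz]
      exact ((((hasDerivAt_id z).const_mul k₀).add ((hasDerivAt_pow 2 z).const_mul (k₁ / 2))).add
        ((hasDerivAt_pow 4 z).const_mul (k₃ / 4))).congr_deriv (by norm_num; ring)
    linear_combination isOpen_Ioi.sub_eq_sub_of_hasDerivAt isPreconnected_Ioi hC hpoly hy
      (mem_Ioi.2 one_pos)
  -- With `C`, `C'` substituted, the identity at `x` is a quintic in `y`; these are its coefficients.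
  have hcoeff : ∀ x > 0, F x + x * k₀ = 0 ∧ -x * P x - 3 * Q x + x * k₁ + 4 * c₀ = 0 ∧
      5 * k₀ = 0 ∧ -P x / 3 + 3 * k₁ + x * k₃ = 0 ∧ (0 : ℝ) = 0 ∧ 2 * k₃ = 0 := fun x hx =>
    eq_zero_of_quintic_eq_zero_Ioi fun y hy => by
      linear_combination h x hx y hy - (y ^ 2 + x) * hC' y hy - 4 * y * hCpoly y hy
  have hk₃ : k₃ = 0 := by linarith [(hcoeff 1 one_pos).2.2.2.2.2]
  have hk₀ : k₀ = 0 := by linarith [(hcoeff 1 one_pos).2.2.1]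
  have hP : ∀ x > 0, P x = 9 * k₁ := fun x hx => by
    linear_combination -3 * (hcoeff x hx).2.2.2.1 + 3 * x * hk₃
  have hQ_affine : ∀ x > 0, Q x = 4 / 3 * c₀ - 8 / 3 * k₁ * x := fun x hx => by
    linear_combination -(hcoeff x hx).2.1 / 3 - x / 3 * hP x hx
  -- `Q` is affine of slope `-8k₁/3`, while `Q' = P = 9k₁`.
  have hk₁ : k₁ = 0 := by
    have hQ₁ : HasDerivAt (fun x => 4 / 3 * c₀ - 8 / 3 * k₁ * x) (P 1) 1 := by
      refine (hQ 1 one_pos).congr_of_eventuallyEq ?_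
      filter_upwards [Ioi_mem_nhds one_pos] with x hx using (hQ_affine x hx).symm
    have := hQ₁.unique (((hasDerivAt_id (1 : ℝ)).const_mul (8 / 3 * k₁)).const_sub (4 / 3 * c₀))
    linarith [hP 1 one_pos]
  have hc₀ : c₀ = C 1 := by simp only [c₀, hk₀, hk₁, hk₃]; ring
  refine ⟨fun x hx => ⟨?_, ?_⟩, fun y hy => ?_⟩
  · linear_combination (hcoeff x hx).1 - x * hk₀
  · rw [hQ_affine x hx, hk₁, hc₀]; ring
  · rw [hCpoly y hy, hk₀, hk₁, hk₃, hc₀]; ring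

theorem hasDerivAt_pd_zero {f : ℝ × ℝ → ℝ} {p : ℝ × ℝ} (hf : DifferentiableAt ℝ f p) :
    HasDerivAt (fun t => f (t, p.2)) (pd 0 f p) p.1 := by
  have := hf.hasFDerivAt.comp_hasDerivAt p.1
    ((hasDerivAt_id p.1).prodMk (hasDerivAt_const p.1 p.2))
  simpa [pd, Function.comp_def] using this

theorem hasDerivAt_pd_one {f : ℝ × ℝ → ℝ} {p : ℝ × ℝ} (hf : DifferentiableAt ℝ f p) :
    HasDerivAt (fun s => f (p.1, s)) (pd 1 f p) p.2 := by
  have := hf.hasFDerivAt.comp_hasDerivAt p.2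
    ((hasDerivAt_const p.2 p.1).prodMk (hasDerivAt_id p.2))
  simpa [pd, Function.comp_def] using this

theorem pd_zero_eq {f : ℝ × ℝ → ℝ} {p : ℝ × ℝ} {d : ℝ} (hf : DifferentiableAt ℝ f p)
    (h : HasDerivAt (fun t => f (t, p.2)) d p.1) : pd 0 f p = d :=
  (hasDerivAt_pd_zero hf).unique h

theorem pd_one_eq {f : ℝ × ℝ → ℝ} {p : ℝ × ℝ} {d : ℝ} (hf : DifferentiableAt ℝ f p)
    (h : HasDerivAt (fun s => f (p.1, s)) d p.2) : pd 1 f p = d :=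
  (hasDerivAt_pd_one hf).unique h

theorem differentiableAt_of_contDiffOn_quadrant {f : ℝ × ℝ → ℝ}
    (hf : ContDiffOn ℝ (⊤ : ℕ∞) f (Ioi 0 ×ˢ Ioi 0)) {x y : ℝ} (hx : 0 < x) (hy : 0 < y) :
    DifferentiableAt ℝ f (x, y) :=
  (hf.differentiableOn (by simp)).differentiableAt
    ((isOpen_Ioi.prod isOpen_Ioi).mem_nhds ⟨hx, hy⟩)

def solA (α β : ℝ) (p : ℝ × ℝ) : ℝ := α + β * p.1

def solB (α β γ : ℝ) (p : ℝ × ℝ) : ℝ :=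
  (γ - 2 * α * p.2 - β * (p.2 ^ 3 / 3 + 3 * p.1 * p.2)) / (p.2 ^ 2 + p.1)

def solC (β : ℝ) (_ : ℝ × ℝ) : ℝ := 3 / 4 * β

section ExplicitSolution

variable {α β γ x y : ℝ}

theorem contDiffOn_solB : ContDiffOn ℝ (⊤ : ℕ∞) (solB α β γ) (Ioi 0 ×ˢ Ioi 0) :=
  ContDiffOn.div (by fun_prop) (by fun_prop) fun p ⟨hx, _⟩ => by
    have : 0 < p.1 := hx
    positivity

theorem pd_zero_solB (hx : 0 < x) (hy : 0 < y) :
    (y ^ 2 + x) * pd 0 (solB α β γ) (x, y) + solB α β γ (x, y) = -(3 * β * y) := by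
  have hD : y ^ 2 + x ≠ 0 := by positivity
  have hN : HasDerivAt (fun t => γ - 2 * α * y - β * (y ^ 3 / 3 + 3 * t * y)) (-(3 * β * y)) x :=
    (((((hasDerivAt_id x).const_mul 3).mul_const y).const_add _).const_mul β).const_sub _
      |>.congr_deriv (by ring)
  rw [pd_zero_eq (differentiableAt_of_contDiffOn_quadrant contDiffOn_solB hx hy)
    (hN.div ((hasDerivAt_id x).const_add (y ^ 2)) hD), solB]
  field_simp
  ring

theorem pd_one_solB (hx : 0 < x) (hy : 0 < y) :
    (y ^ 2 + x) * pd 1 (solB α β γ) (x, y) + 2 * y * solB α β γ (x, y) =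
      -(2 * α) - β * (y ^ 2 + 3 * x) := by
  have hD : y ^ 2 + x ≠ 0 := by positivity
  have hN : HasDerivAt (fun s => γ - 2 * α * s - β * (s ^ 3 / 3 + 3 * x * s))
      (-(2 * α) - β * (y ^ 2 + 3 * x)) y :=
    ((hasDerivAt_const y γ).sub ((hasDerivAt_id y).const_mul (2 * α))).sub
      ((((hasDerivAt_pow 3 y).div_const 3).add ((hasDerivAt_id y).const_mul (3 * x))).const_mul β)
      |>.congr_deriv (by push_cast; ring)
  rw [pd_one_eq (differentiableAt_of_contDiffOn_quadrant contDiffOn_solB hx hy)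
    (hN.div ((hasDerivAt_pow 2 y).add_const x) hD), solB]
  field_simp
  ring

theorem sol3d_sol (α β γ : ℝ) : Sol3d (solA α β) (solB α β γ) (solC β) := by
  refine ⟨by unfold solA; fun_prop, contDiffOn_solB, contDiffOn_const, ?_⟩
  rintro ⟨x, y⟩ ⟨hx : 0 < x, hy : 0 < y⟩
  have hAx : pd 0 (solA α β) (x, y) = β :=
    pd_zero_eq (by unfold solA; fun_prop) (by
      simp only [solA]; simpa using ((hasDerivAt_id x).const_mul β).const_add α)
  have hAy : pd 1 (solA α β) (x, y) = 0 :=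
    pd_one_eq (by unfold solA; fun_prop) (by simp only [solA]; exact hasDerivAt_const y _)
  have hCx : pd 0 (solC β) (x, y) = 0 :=
    pd_zero_eq (by unfold solC; fun_prop) (hasDerivAt_const x _)
  have hCy : pd 1 (solC β) (x, y) = 0 :=
    pd_one_eq (by unfold solC; fun_prop) (hasDerivAt_const y _)
  refine ⟨hAy, ?_, ?_, hCx⟩
  · rw [hAx, solA]
    linear_combination pd_one_solB (α := α) (β := β) (γ := γ) hx hy
  · rw [hCy, solC]
    linear_combination pd_zero_solB (α := α) (β := β) (γ := γ) hx hy

end ExplicitSolution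

-- The second equation of the system says exactly that `∂_y yInvariant a b x y = 0`.
def yInvariant (a b : ℝ × ℝ → ℝ) (x y : ℝ) : ℝ :=
  (y ^ 2 + x) * b (x, y) + deriv (fun t => a (t, 1)) x * (y ^ 3 / 3 + x * y) + 2 * a (x, 1) * y

namespace Sol3d

variable {a b c : ℝ × ℝ → ℝ} {x y : ℝ}

theorem a_apply_eq (h : Sol3d a b c) (hx : 0 < x) (hy : 0 < y) :
    a (x, y) = a (x, 1) :=
  isOpen_Ioi.eq_of_hasDerivAt_zero isPreconnected_Ioi (f := fun s => a (x, s)) (fun s hs => by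
    simpa [(h.2.2.2 (x, s) ⟨hx, hs⟩).1] using
      hasDerivAt_pd_one (differentiableAt_of_contDiffOn_quadrant h.1 hx hs))
    hy (mem_Ioi.2 one_pos)

theorem c_apply_eq (h : Sol3d a b c) (hx : 0 < x) (hy : 0 < y) :
    c (x, y) = c (1, y) :=
  isOpen_Ioi.eq_of_hasDerivAt_zero isPreconnected_Ioi (f := fun t => c (t, y)) (fun t ht => by
    simpa [(h.2.2.2 (t, y) ⟨ht, hy⟩).2.2.2] using
      hasDerivAt_pd_zero (differentiableAt_of_contDiffOn_quadrant h.2.2.1 ht hy))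
    hx (mem_Ioi.2 one_pos)

theorem pd_zero_a_eq_deriv (h : Sol3d a b c) (hx : 0 < x) (hy : 0 < y) :
    pd 0 a (x, y) = deriv (fun t => a (t, 1)) x := by
  have hslice : HasDerivAt (fun t => a (t, y)) (pd 0 a (x, y)) x :=
    hasDerivAt_pd_zero (differentiableAt_of_contDiffOn_quadrant h.1 hx hy)
  refine (hslice.congr_of_eventuallyEq ?_).deriv.symm
  filter_upwards [Ioi_mem_nhds hx] with t ht using (h.a_apply_eq ht hy).symm

theorem pd_one_c_eq_deriv (h : Sol3d a b c) (hx : 0 < x) (hy : 0 < y) :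
    pd 1 c (x, y) = deriv (fun s => c (1, s)) y := by
  have hslice : HasDerivAt (fun s => c (x, s)) (pd 1 c (x, y)) y :=
    hasDerivAt_pd_one (differentiableAt_of_contDiffOn_quadrant h.2.2.1 hx hy)
  refine (hslice.congr_of_eventuallyEq ?_).deriv.symm
  filter_upwards [Ioi_mem_nhds hy] with s hs using (h.c_apply_eq hx hs).symm

theorem hasDerivAt_a (h : Sol3d a b c) (hx : 0 < x) :
    HasDerivAt (fun t => a (t, 1)) (deriv (fun t => a (t, 1)) x) x := by
  simpa [h.pd_zero_a_eq_deriv hx one_pos] using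
    hasDerivAt_pd_zero (differentiableAt_of_contDiffOn_quadrant h.1 hx one_pos)

theorem hasDerivAt_deriv_a (h : Sol3d a b c) (hx : 0 < x) :
    HasDerivAt (deriv fun t => a (t, 1)) (deriv (deriv fun t => a (t, 1)) x) x := by
  refine ContDiffOn.hasDerivAt_deriv isOpen_Ioi ?_ hx
  exact (h.1.comp (contDiff_id.prodMk contDiff_const).contDiffOn
    fun t ht => ⟨ht, mem_Ioi.2 one_pos⟩).of_le (by norm_cast)

theorem hasDerivAt_c (h : Sol3d a b c) (hy : 0 < y) :
    HasDerivAt (fun s => c (1, s)) (deriv (fun s => c (1, s)) y) y :=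
  (hasDerivAt_pd_one
    (differentiableAt_of_contDiffOn_quadrant h.2.2.1 one_pos hy)).differentiableAt.hasDerivAt

theorem yInvariant_eq (h : Sol3d a b c) (hx : 0 < x) (hy : 0 < y) :
    yInvariant a b x y = yInvariant a b x 1 := by
  refine isOpen_Ioi.eq_of_hasDerivAt_zero isPreconnected_Ioi (f := yInvariant a b x)
    (fun s hs => ?_) hy (mem_Ioi.2 one_pos)
  have hb := hasDerivAt_pd_one (differentiableAt_of_contDiffOn_quadrant h.2.1 hx hs)
  have heq := (h.2.2.2 (x, s) ⟨hx, hs⟩).2.1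
  rw [h.pd_zero_a_eq_deriv hx hs, h.a_apply_eq hx hs] at heq
  exact ((((hasDerivAt_pow 2 s).add_const x).mul hb).add
    ((((hasDerivAt_pow 3 s).div_const 3).add ((hasDerivAt_id s).const_mul x)).const_mul _)).add
    ((hasDerivAt_id s).const_mul (2 * a (x, 1))) |>.congr_deriv (by
      push_cast; linear_combination heq)

theorem hasDerivAt_yInvariant (h : Sol3d a b c) (hx : 0 < x) (hy : 0 < y) :
    HasDerivAt (fun t => yInvariant a b t 1)
      (deriv (deriv fun t => a (t, 1)) x * (y ^ 3 / 3 + x * y)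
        + 3 * deriv (fun t => a (t, 1)) x * y
        - (y ^ 2 + x) * deriv (fun s => c (1, s)) y - 4 * y * c (1, y)) x := by
  have hb := hasDerivAt_pd_zero (differentiableAt_of_contDiffOn_quadrant h.2.1 hx hy)
  have heq := (h.2.2.2 (x, y) ⟨hx, hy⟩).2.2.1
  rw [h.pd_one_c_eq_deriv hx hy, h.c_apply_eq hx hy] at heq
  have hderiv : HasDerivAt (fun t => yInvariant a b t y) _ x :=
    ((((hasDerivAt_id x).const_add (y ^ 2)).mul hb).add
      ((h.hasDerivAt_deriv_a hx).mul (((hasDerivAt_id x).mul_const y).const_add (y ^ 3 / 3)))).add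
      (((h.hasDerivAt_a hx).const_mul 2).mul_const y)
  refine (hderiv.congr_of_eventuallyEq ?_).congr_deriv ?_
  · filter_upwards [Ioi_mem_nhds hx] with t ht using (h.yInvariant_eq ht hy).symm
  · simp only [id]
    linear_combination heq

theorem exists_eq_sol (h : Sol3d a b c) : ∃ α β γ : ℝ, ∀ p ∈ (Ioi 0 ×ˢ Ioi 0 : Set (ℝ × ℝ)),
    a p = solA α β p ∧ b p = solB α β γ p ∧ c p = solC β p := by
  obtain ⟨hF, hC⟩ := eq_const_of_separated_identity (F := deriv fun t => yInvariant a b t 1)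
    (fun x hx => h.hasDerivAt_deriv_a hx) (fun y hy => h.hasDerivAt_c hy)
    (fun x hx y hy => by
      rw [(h.hasDerivAt_yInvariant hx hy).deriv]
      ring)
  set β := 4 / 3 * c (1, 1)
  have hA : ∀ x > 0, a (x, 1) = a (1, 1) - β + β * x := fun x hx => by
    have := isOpen_Ioi.sub_eq_sub_of_hasDerivAt isPreconnected_Ioi (g := fun t => β * t)
      (fun t ht => h.hasDerivAt_a ht)
      (fun t ht => by simpa [(hF t ht).2] using (hasDerivAt_id t).const_mul β)
      hx (mem_Ioi.2 one_pos)
    linear_combination this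
  set γ := yInvariant a b 1 1
  have hγ : ∀ x > 0, yInvariant a b x 1 = γ := fun x hx =>
    isOpen_Ioi.eq_of_hasDerivAt_zero isPreconnected_Ioi (f := fun t => yInvariant a b t 1)
      (fun t ht => by
        simpa [(hF t ht).1] using (h.hasDerivAt_yInvariant ht one_pos).differentiableAt.hasDerivAt)
      hx (mem_Ioi.2 one_pos)
  refine ⟨a (1, 1) - β, β, γ, ?_⟩
  rintro ⟨x, y⟩ ⟨hx : 0 < x, hy : 0 < y⟩
  have hb := (h.yInvariant_eq hx hy).trans (hγ x hx)
  rw [yInvariant, (hF x hx).2, hA x hx] at hb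
  refine ⟨?_, ?_, ?_⟩
  · exact (h.a_apply_eq hx hy).trans (hA x hx)
  · rw [solB, eq_div_iff (by positivity)]
    linear_combination hb
  · rw [h.c_apply_eq hx hy, hC y hy, solC]
    ring

end Sol3d

/-- The space of quadratic-in-momenta integrals of the geodesic flow of
`ds² = 2(y²+x)dxdy` on `(0,∞)×(0,∞)` has dimension exactly 3. -/
theorem stmt12 :
    ∃ a₁ b₁ c₁ a₂ b₂ c₂ a₃ b₃ c₃ : ℝ × ℝ → ℝ,
      Sol3d a₁ b₁ c₁ ∧ Sol3d a₂ b₂ c₂ ∧ Sol3d a₃ b₃ c₃ ∧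
      (∀ t₁ t₂ t₃ : ℝ,
        (∀ p ∈ (Set.Ioi 0 ×ˢ Set.Ioi 0 : Set (ℝ × ℝ)),
          t₁ * a₁ p + t₂ * a₂ p + t₃ * a₃ p = 0 ∧
          t₁ * b₁ p + t₂ * b₂ p + t₃ * b₃ p = 0 ∧
          t₁ * c₁ p + t₂ * c₂ p + t₃ * c₃ p = 0) →
        t₁ = 0 ∧ t₂ = 0 ∧ t₃ = 0) ∧
      (∀ a b c : ℝ × ℝ → ℝ, Sol3d a b c →
        ∃ t₁ t₂ t₃ : ℝ, ∀ p ∈ (Set.Ioi 0 ×ˢ Set.Ioi 0 : Set (ℝ × ℝ)),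
          a p = t₁ * a₁ p + t₂ * a₂ p + t₃ * a₃ p ∧
          b p = t₁ * b₁ p + t₂ * b₂ p + t₃ * b₃ p ∧
          c p = t₁ * c₁ p + t₂ * c₂ p + t₃ * c₃ p) := by
  refine ⟨solA 1 0, solB 1 0 0, solC 0, solA 0 1, solB 0 1 0, solC 1,
    solA 0 0, solB 0 0 1, solC 0, sol3d_sol 1 0 0, sol3d_sol 0 1 0, sol3d_sol 0 0 1,
    fun t₁ t₂ t₃ h => ?_, fun a b c h => ?_⟩
  · obtain ⟨ha₁, hb₁, -⟩ := h (1, 1) (by norm_num)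
    obtain ⟨ha₂, -, -⟩ := h (2, 1) (by norm_num)
    norm_num [solA, solB] at ha₁ hb₁ ha₂
    exact ⟨by linarith, by linarith, by linarith⟩
  · obtain ⟨α, β, γ, hsol⟩ := h.exists_eq_sol
    refine ⟨α, β, γ, fun p hp => ?_⟩
    simp only [hsol p hp, solA, solB, solC]
    exact ⟨by ring, by ring, by ring⟩
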